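/- arXiv:2602.20416 — 2 statements merged into one kernel-verified Lean document; each statement's English description precedes it below -/
import Mathlib

section
/- For a sequence of i.i.d. real-valued random variables with a common continuous distribution function, the record indicator random variables ζ_1, ζ_2, ..., ζ_n are mutually independent for every n ≥ 1. -/
/-!
Rényi's argument. For `x : Fin n → α` the relative rank `R_j = #{i < j | x_i < x_j}` lies in
`{0, …, j}`, and `ζ_{j+1}` is the indicator of `R_j = j` (positions are shifted by one).
On permutations of `Fin n` the map `π ↦ (R_j(π))_j` (the Lehmer code) is injective — `π j` is the
`R_j`-th smallest (from 0) of the values not taken at positions after `j` — hence a bijection onto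
`∏_j {0, …, j}`, both sides having `n!` elements. Permuting the coordinates of an a.s. injective
exchangeable vector acts on its relative-rank vector through this bijection, so that vector is
uniform on `∏_j {0, …, j}`: its coordinates are independent.
-/

open Finset MeasureTheory ProbabilityTheory Equiv
open scoped ENNReal

section RelativeRank

variable {α : Type*} [LinearOrder α] {n : ℕ}

def relRank (x : Fin n → α) (j : Fin n) : Fin (j + 1) :=
  ⟨#{i ∈ Iio j | x i < x j}, Nat.lt_succ_of_le <| (card_filter_le _ _).trans (Fin.card_Iio j).le⟩

theorem relRank_eq_last_iff {x : Fin n → α} {j : Fin n} :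
    relRank x j = Fin.last j ↔ ∀ i < j, x i < x j := by
  rw [Fin.ext_iff, Fin.val_last]
  change #{i ∈ Iio j | x i < x j} = (j : ℕ) ↔ _
  rw [← Fin.card_Iio j, card_filter_eq_iff]
  simp

theorem relRank_congr {β : Type*} [LinearOrder β] {x : Fin n → α} {y : Fin n → β}
    (h : ∀ i j, x i < x j ↔ y i < y j) : relRank x = relRank y := by
  ext j
  simp only [relRank, h]

theorem Finset.eq_of_card_filter_lt_eq {s : Finset α} {a b : α} (ha : a ∈ s) (hb : b ∈ s)
    (h : #{x ∈ s | x < a} = #{x ∈ s | x < b}) : a = b := by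
  by_contra hab
  wlog hlt : a < b generalizing a b
  · exact this hb ha h.symm (Ne.symm hab) ((Ne.symm hab).lt_of_le (not_lt.1 hlt))
  refine (card_lt_card ?_).ne h
  refine (ssubset_iff_of_subset fun x hx => ?_).2 ⟨a, by simp [ha, hlt]⟩
  simp only [mem_filter] at hx ⊢
  exact ⟨hx.1, hx.2.trans hlt⟩

theorem val_relRank_perm (π : Perm (Fin n)) (j : Fin n) :
    (relRank π j : ℕ) = #{v ∈ (Iic j).image π | v < π j} := by
  rw [filter_image, card_image_of_injective _ π.injective]
  change #{i ∈ Iio j | π i < π j} = _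
  congr 1
  ext i
  simp only [mem_filter, mem_Iio, mem_Iic]
  constructor
  · exact fun h => ⟨h.1.le, h.2⟩
  · exact fun h => ⟨h.1.lt_of_ne fun hij => (hij ▸ h.2).false, h.2⟩

theorem image_Iic_eq_of_eq_on_Ioi {π π' : Perm (Fin n)} {j : Fin n}
    (h : ∀ i, j < i → π i = π' i) : (Iic j).image π = (Iic j).image π' := by
  have hIoi : π '' Set.Ioi j = π' '' Set.Ioi j := Set.image_congr fun i hi => h i hi
  apply coe_injective
  rw [coe_image, coe_image, coe_Iic, ← compl_compl (Set.Iic j), Set.compl_Iic, π.image_compl,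
    π'.image_compl, hIoi]

theorem relRank_perm_injective : Function.Injective fun π : Perm (Fin n) => relRank ⇑π := by
  intro π π' hππ'
  ext1 j
  induction j using WellFoundedGT.induction with
  | _ j ih =>
    have hV := image_Iic_eq_of_eq_on_Ioi fun i hi => ih i hi
    refine Finset.eq_of_card_filter_lt_eq (s := (Iic j).image π)
      (mem_image_of_mem _ (mem_Iic.2 le_rfl)) (hV ▸ mem_image_of_mem _ (mem_Iic.2 le_rfl)) ?_
    rw [← val_relRank_perm, hV, ← val_relRank_perm]
    exact congrArg Fin.val (congrFun hππ' j)

theorem relRank_perm_bijective : Function.Bijective fun π : Perm (Fin n) => relRank ⇑π := by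
  refine (Fintype.bijective_iff_injective_and_card _).2 ⟨relRank_perm_injective, ?_⟩
  simp [Fintype.card_perm, Fintype.card_pi, Fin.prod_univ_eq_prod_range (· + 1),
    prod_range_add_one_eq_factorial]

noncomputable def relRankEquiv : Perm (Fin n) ≃ ((j : Fin n) → Fin (j + 1)) :=
  Equiv.ofBijective _ relRank_perm_bijective

theorem exists_perm_lt_iff_lt {x : Fin n → α} (hx : Function.Injective x) :
    ∃ π : Perm (Fin n), ∀ i j, x i < x j ↔ π i < π j := by
  have hsort : StrictMono (x ∘ Tuple.sort x) :=
    (Tuple.monotone_sort x).strictMono_of_injective (hx.comp (Tuple.sort x).injective)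
  refine ⟨(Tuple.sort x)⁻¹, fun i j => ?_⟩
  simpa using hsort.lt_iff_lt (a := (Tuple.sort x)⁻¹ i) (b := (Tuple.sort x)⁻¹ j)

theorem relRank_comp_perm {x : Fin n → α} (hx : Function.Injective x) (σ : Perm (Fin n)) :
    relRank (x ∘ σ) = relRankEquiv (relRankEquiv.symm (relRank x) * σ) := by
  obtain ⟨π, hπ⟩ := exists_perm_lt_iff_lt hx
  have hx_eq : relRank x = relRankEquiv π := relRank_congr hπ
  rw [hx_eq, Equiv.symm_apply_apply]
  exact relRank_congr fun i j => hπ (σ i) (σ j)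

theorem relRank_succ_eq_last_iff (x : ℕ → α) (k : Fin n) :
    relRank (fun i : Fin n => x ((i : ℕ) + 1)) k = Fin.last k ↔
      ∀ m, 1 ≤ m → m < (k : ℕ) + 1 → x m < x ((k : ℕ) + 1) := by
  rw [relRank_eq_last_iff]
  constructor
  · rintro hk (_ | m) h1 hm
    · omega
    · exact hk ⟨m, by omega⟩ (Fin.mk_lt_of_lt_val (by omega))
  · exact fun hk i hi => hk _ (Nat.le_add_left 1 i) (Nat.succ_lt_succ hi)

end RelativeRank

theorem Finset.prod_Icc_one_eq_prod_fin {M : Type*} [CommMonoid M] (f : ℕ → M) (n : ℕ) :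
    ∏ j ∈ Icc 1 n, f j = ∏ k : Fin n, f ((k : ℕ) + 1) := by
  rw [Fin.prod_univ_eq_prod_range (fun k => f (k + 1)), range_eq_Ico, prod_Ico_add' f 0 n 1]
  rfl

theorem MeasureTheory.Measure.map_comp_perm_pi {ι β : Type*} [Fintype ι] [MeasurableSpace β]
    (μ : Measure β) [SigmaFinite μ] (σ : Perm ι) :
    (Measure.pi fun _ : ι => μ).map (fun x => x ∘ σ) = Measure.pi fun _ => μ := by
  convert (measurePreserving_piCongrLeft (fun _ : ι => μ) σ.symm).map_eq using 2
  ext x i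
  simp [MeasurableEquiv.coe_piCongrLeft, Equiv.piCongrLeft_apply]

theorem ProbabilityTheory.IndepFun.measure_setOf_eq_eq_zero {Ω β : Type*} [MeasurableSpace Ω]
    [MeasurableSpace β] [MeasurableEq β] {μ : Measure Ω} [IsProbabilityMeasure μ] {X Y : Ω → β}
    (hXY : IndepFun X Y μ) (hX : Measurable X) (hY : Measurable Y)
    [NullSingletonClass (μ.map Y)] :
    μ {ω | X ω = Y ω} = 0 := by
  have hdiag : MeasurableSet {p : β × β | p.1 = p.2} := measurableSet_diagonal
  change μ ((fun ω => (X ω, Y ω)) ⁻¹' {p | p.1 = p.2}) = 0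
  rw [← Measure.map_apply (hX.prodMk hY) hdiag,
    (indepFun_iff_map_prod_eq_prod_map_map hX.aemeasurable hY.aemeasurable).1 hXY,
    Measure.prod_apply hdiag]
  simp

theorem MeasureTheory.Measure.ae_injective_pi {ι β : Type*} [Fintype ι] [MeasurableSpace β]
    [MeasurableEq β] (μ : Measure β) [IsProbabilityMeasure μ] [NullSingletonClass μ] :
    ∀ᵐ x ∂(Measure.pi fun _ : ι => μ), Function.Injective x := by
  have hindep : iIndepFun (fun i (x : ι → β) => x i) (Measure.pi fun _ => μ) :=
    iIndepFun_pi (X := fun _ x => x) fun _ => aemeasurable_id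
  have hties : ∀ i j, i ≠ j → (Measure.pi fun _ : ι => μ) {x | x i = x j} = 0 := by
    intro i j hij
    have : NullSingletonClass ((Measure.pi fun _ : ι => μ).map (fun x => x j)) := by
      rwa [(measurePreserving_eval _ j).map_eq]
    exact (hindep.indepFun hij).measure_setOf_eq_eq_zero (measurable_pi_apply i)
      (measurable_pi_apply j)
  rw [ae_iff]
  refine measure_mono_null (fun x hx => ?_)
    (measure_iUnion_null fun i => measure_iUnion_null fun j => measure_iUnion_null (hties i j))
  obtain ⟨i, j, hxij, hij⟩ := Function.not_injective_iff.1 hx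
  exact Set.mem_iUnion₂.2 ⟨i, j, Set.mem_iUnion.2 ⟨hij, hxij⟩⟩

theorem ProbabilityTheory.eq_uniformOn_univ_of_measure_singleton_eq {C : Type*} [Fintype C]
    [MeasurableSpace C] [MeasurableSingletonClass C] {ρ : Measure C} [IsProbabilityMeasure ρ]
    (h : ∀ c c', ρ {c} = ρ {c'}) : ρ = uniformOn Set.univ := by
  refine Measure.ext_of_singleton fun c => ?_
  have hsum : (Fintype.card C : ℝ≥0∞) * ρ {c} = 1 := by
    rw [← measure_univ (μ := ρ), ← coe_univ, ← sum_measure_singleton,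
      sum_congr rfl fun c' _ => h c' c, sum_const, card_univ, nsmul_eq_mul]
  rw [uniformOn_univ, Measure.count_singleton, one_div,
    ENNReal.eq_inv_of_mul_eq_one_left ((mul_comm _ _).trans hsum)]

theorem ProbabilityTheory.pi_uniformOn_univ_singleton_eq {ι : Type*} [Fintype ι]
    {C : ι → Type*} [∀ i, Fintype (C i)] [∀ i, MeasurableSpace (C i)]
    [∀ i, MeasurableSingletonClass (C i)] (c c' : (i : ι) → C i) :
    (Measure.pi fun i => uniformOn (Set.univ : Set (C i))) {c} =
      (Measure.pi fun i => uniformOn (Set.univ : Set (C i))) {c'} := by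
  simp [Measure.pi_singleton, uniformOn_univ]

theorem ProbabilityTheory.iIndepFun_of_map_eq_pi {Ω ι : Type*} [MeasurableSpace Ω]
    {μ : Measure Ω} [IsProbabilityMeasure μ] [Fintype ι] {β : ι → Type*}
    [∀ i, MeasurableSpace (β i)] {ρ : (i : ι) → Measure (β i)} [∀ i, IsProbabilityMeasure (ρ i)]
    {V : Ω → (i : ι) → β i} (hV : Measurable V) (h : μ.map V = Measure.pi ρ) :
    iIndepFun (fun i ω => V ω i) μ := by
  have hmarg : ∀ i, μ.map (fun ω => V ω i) = ρ i := fun i => by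
    rw [← (measurePreserving_eval ρ i).map_eq, ← h, Measure.map_map (measurable_pi_apply i) hV]
    rfl
  rw [iIndepFun_iff_map_fun_eq_pi_map fun i => (hV.eval (a := i)).aemeasurable]
  simp only [hmarg]
  exact h

section Exchangeable

variable {α : Type*} [LinearOrder α] [TopologicalSpace α] [OrderClosedTopology α]
  [SecondCountableTopology α] [MeasurableSpace α] [OpensMeasurableSpace α] {n : ℕ}

theorem measurable_relRank : Measurable (relRank : (Fin n → α) → (j : Fin n) → Fin (j + 1)) := by
  refine measurable_pi_lambda _ fun j => measurable_to_countable' fun r => ?_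
  have hcount : Measurable fun x : Fin n → α => (relRank x j : ℕ) := by
    simp only [relRank, card_filter]
    exact Finset.measurable_sum _ fun i _ => Measurable.ite
      (measurableSet_lt (measurable_pi_apply i) (measurable_pi_apply j)) measurable_const
      measurable_const
  convert hcount (measurableSet_singleton (r : ℕ)) using 1
  ext x
  simp [Fin.ext_iff]

variable {ν : Measure (Fin n → α)}

theorem measure_relRank_preimage_singleton_eq
    (hexch : ∀ σ : Perm (Fin n), ν.map (fun x => x ∘ σ) = ν)
    (hinj : ∀ᵐ x ∂ν, Function.Injective x) (c c' : (j : Fin n) → Fin (j + 1)) :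
    ν (relRank ⁻¹' {c}) = ν (relRank ⁻¹' {c'}) := by
  set σ := (relRankEquiv.symm c)⁻¹ * relRankEquiv.symm c'
  have hσ : (fun x => x ∘ σ) ⁻¹' (relRank ⁻¹' {c'}) =ᵐ[ν] relRank ⁻¹' {c} := by
    filter_upwards [hinj] with x hx
    change (relRank (x ∘ σ) = c') = (relRank x = c)
    rw [eq_iff_iff, relRank_comp_perm hx, ← Equiv.eq_symm_apply, ← eq_mul_inv_iff_mul_eq]
    simp [σ]
  rw [← measure_congr hσ, ← Measure.map_apply
    (measurable_pi_lambda (fun x => x ∘ σ) fun i => measurable_pi_apply (σ i))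
    (measurable_relRank (measurableSet_singleton c')), hexch]

theorem map_relRank_eq_pi [IsProbabilityMeasure ν]
    (hexch : ∀ σ : Perm (Fin n), ν.map (fun x => x ∘ σ) = ν)
    (hinj : ∀ᵐ x ∂ν, Function.Injective x) :
    ν.map relRank = Measure.pi fun _ => uniformOn Set.univ := by
  have := Measure.isProbabilityMeasure_map (μ := ν) measurable_relRank.aemeasurable
  rw [eq_uniformOn_univ_of_measure_singleton_eq (ρ := ν.map relRank) fun c c' => ?_,
    eq_uniformOn_univ_of_measure_singleton_eq pi_uniformOn_univ_singleton_eq]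
  rw [Measure.map_apply measurable_relRank (measurableSet_singleton c),
    Measure.map_apply measurable_relRank (measurableSet_singleton c')]
  exact measure_relRank_preimage_singleton_eq hexch hinj c c'

theorem iIndepFun_relRank_of_iid {Ω : Type*} [MeasurableSpace Ω] {P : Measure Ω}
    [IsProbabilityMeasure P] {μ : Measure α} [IsProbabilityMeasure μ] [NullSingletonClass μ]
    {Y : Fin n → Ω → α} (hmeas : ∀ k, Measurable (Y k)) (hindep : iIndepFun Y P)
    (hlaw : ∀ k, P.map (Y k) = μ) :
    iIndepFun (fun k ω => relRank (fun i => Y i ω) k) P := by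
  set V : Ω → Fin n → α := fun ω i => Y i ω
  have hV : Measurable V := measurable_pi_lambda _ hmeas
  have hlawV : P.map V = Measure.pi fun _ => μ :=
    (hindep.map_fun_eq_pi_map fun k => (hmeas k).aemeasurable).trans
      (congrArg Measure.pi (funext hlaw))
  refine iIndepFun_of_map_eq_pi (ρ := fun _ => uniformOn Set.univ) (measurable_relRank.comp hV) ?_
  change P.map (relRank ∘ V) = _
  rw [← Measure.map_map measurable_relRank hV, hlawV]
  exact map_relRank_eq_pi (Measure.map_comp_perm_pi μ) (Measure.ae_injective_pi μ)

end Exchangeable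

open scoped Classical in
/-- For i.i.d. real random variables with a common continuous distribution function,
the record indicators `ζ 1, ..., ζ n` are mutually independent, in the sense that
for all functions `h j`, `E[∏ j, h j (ζ j)] = ∏ j, E[h j (ζ j)]`. -/
theorem record_indicators_iid_indep {Ω : Type*} [MeasureSpace Ω]
    [IsProbabilityMeasure (ℙ : Measure Ω)]
    (X : ℕ → Ω → ℝ) (hmeas : ∀ i, Measurable (X i))
    (hindep : iIndepFun X ℙ)
    (hid : ∀ i j, IdentDistrib (X i) (X j) ℙ ℙ)
    (hcont : ∀ c : ℝ, ℙ {ω | X 1 ω = c} = 0)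
    (ζ : ℕ → Ω → ℝ)
    (hζ : ∀ j ω, ζ j ω = if ∀ m, 1 ≤ m → m < j → X m ω < X j ω then 1 else 0) :
    ∀ n : ℕ, 1 ≤ n → ∀ h : ℕ → ℝ → ℝ,
      ∫ ω, ∏ j ∈ Finset.Icc 1 n, h j (ζ j ω) ∂ℙ
        = ∏ j ∈ Finset.Icc 1 n, ∫ ω, h j (ζ j ω) ∂ℙ := by
  intro n _ h
  have : IsProbabilityMeasure ((ℙ : Measure Ω).map (X 1)) :=
    Measure.isProbabilityMeasure_map (hmeas 1).aemeasurable
  have : NullSingletonClass ((ℙ : Measure Ω).map (X 1)) := ⟨fun c => by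
    rw [Measure.map_apply (hmeas 1) (measurableSet_singleton c)]
    exact hcont c⟩
  have hY : Measurable fun ω (k : Fin n) => X ((k : ℕ) + 1) ω :=
    measurable_pi_lambda _ fun k => hmeas _
  have hR := iIndepFun_relRank_of_iid (Y := fun k : Fin n => X ((k : ℕ) + 1)) (fun k => hmeas _)
    (hindep.precomp ((add_left_injective 1).comp Fin.val_injective)) fun k => (hid _ 1).map_eq
  simp_rw [Finset.prod_Icc_one_eq_prod_fin, hζ, ← relRank_succ_eq_last_iff]
  exact hR.integral_fun_prod_comp
    (f := fun (k : Fin n) r => h (k + 1) (if r = Fin.last k then 1 else 0))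
    (fun _ => (measurable_relRank.comp hY).eval.aemeasurable)
    fun _ => Measurable.of_discrete.aestronglyMeasurable
end

section
/- For a sequence of i.i.d. real random variables with continuous common distribution, ℙ(ζ_i = 1, ζ_j = 1) = 1/(ij) for all 1 ≤ i < j, i.e., the joint probability of records at times i and j factorizes. -/
/-!
The law `ν` of the sequence `(X n)` on `ℕ → ℝ` is invariant under permutations of the
coordinates (independence plus identical distribution) and gives no mass to ties (independence
plus continuity). Hence, if `E` is an event symmetric in the coordinates of a finite set `s`,
the events "`k` is the strict maximum over `s`" for `k ∈ s` split `E` up to a null set into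
`#s` pieces of equal probability. With `s = {1, …, j}` and `E` everything, a record at `j` has
probability `1/j`; with `s = {1, …, i}` and `E` the record at `j`, which is symmetric in
`1, …, i` because `i < j`, the joint probability is `1/(ij)`.
-/

open MeasureTheory ProbabilityTheory
open scoped ENNReal

lemma MeasureTheory.Measure.prod_diagonal_eq_zero {α : Type*} [MeasurableSpace α]
    [MeasurableEq α] (μ ν : Measure α) [SFinite ν] [NullSingletonClass ν] :
    μ.prod ν (Set.diagonal α) = 0 := by
  rw [Measure.prod_apply measurableSet_diagonal]
  simp [Set.diagonal, Set.preimage]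

lemma ProbabilityTheory.IndepFun.measure_eq_eq_zero {Ω α : Type*} [MeasurableSpace Ω]
    [MeasurableSpace α] [MeasurableEq α] {P : Measure Ω} [IsFiniteMeasure P] {X Y : Ω → α}
    (hX : Measurable X) (hY : Measurable Y) (hXY : IndepFun X Y P)
    [NullSingletonClass (P.map Y)] :
    P {ω | X ω = Y ω} = 0 := by
  have hlaw := (indepFun_iff_map_prod_eq_prod_map_map hX.aemeasurable hY.aemeasurable).1 hXY
  have h := Measure.map_apply (μ := P) (hX.prodMk hY) (measurableSet_diagonal (α := α))
  rw [hlaw, Measure.prod_diagonal_eq_zero] at h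
  exact h.symm

lemma ProbabilityTheory.iIndepFun.map_fun_setOf_apply_eq_eq_zero {Ω ι α : Type*}
    [MeasurableSpace Ω] [MeasurableSpace α] [MeasurableEq α] {P : Measure Ω}
    [IsProbabilityMeasure P] {X : ι → Ω → α} (hmeas : ∀ i, Measurable (X i))
    (hindep : iIndepFun X P) (hatom : ∀ i, NullSingletonClass (P.map (X i)))
    {a b : ι} (hab : a ≠ b) :
    (P.map fun ω i => X i ω) {v | v a = v b} = 0 := by
  rw [Measure.map_apply (measurable_pi_lambda _ hmeas)
    (measurableSet_eq_fun (measurable_pi_apply a) (measurable_pi_apply b))]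
  exact (hindep.indepFun hab).measure_eq_eq_zero (hmeas a) (hmeas b)

lemma ProbabilityTheory.iIndepFun.measurePreserving_comp_perm {Ω ι β : Type*}
    [MeasurableSpace Ω] [MeasurableSpace β] {P : Measure Ω} [IsProbabilityMeasure P]
    {X : ι → Ω → β} (hmeas : ∀ i, Measurable (X i)) (hindep : iIndepFun X P)
    (hid : ∀ i j, IdentDistrib (X i) (X j) P P) (σ : Equiv.Perm ι) :
    MeasurePreserving (fun v : ι → β => v ∘ σ) (P.map fun ω i => X i ω)
      (P.map fun ω i => X i ω) := by
  have hperm : Measurable fun v : ι → β => v ∘ σ :=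
    measurable_pi_lambda _ fun i => measurable_pi_apply (σ i)
  refine ⟨hperm, ?_⟩
  rw [Measure.map_map hperm (measurable_pi_lambda _ hmeas)]
  change P.map (fun ω i => X (σ i) ω) = _
  rw [(hindep.precomp σ.injective).map_fun_eq_infinitePi_map (fun i => hmeas (σ i)),
    hindep.map_fun_eq_infinitePi_map hmeas]
  simp_rw [fun i => (hid (σ i) i).map_eq]

lemma Equiv.swap_apply_mem_iff {ι : Type*} [DecidableEq ι] {s : Finset ι} {a b : ι}
    (ha : a ∈ s) (hb : b ∈ s) (m : ι) : Equiv.swap a b m ∈ s ↔ m ∈ s := by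
  rw [Equiv.swap_apply_def]
  split_ifs <;> simp_all

section StrictMax

variable {ι : Type*} {s : Finset ι}

def strictMaxSet (s : Finset ι) (k : ι) : Set (ι → ℝ) :=
  {v | ∀ m ∈ s, m ≠ k → v m < v k}

lemma measurableSet_strictMaxSet (s : Finset ι) (k : ι) :
    MeasurableSet (strictMaxSet s k) := by
  have h : strictMaxSet s k = ⋂ m ∈ s, {v : ι → ℝ | m ≠ k → v m < v k} := by
    ext; simp [strictMaxSet]
  rw [h]
  refine Finset.measurableSet_biInter s fun m _ => ?_
  by_cases hmk : m = k
  · simp [hmk]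
  · simpa [hmk] using measurableSet_lt (measurable_pi_apply m) (measurable_pi_apply k)

lemma preimage_comp_strictMaxSet (σ : Equiv.Perm ι) (hσ : ∀ m, σ m ∈ s ↔ m ∈ s) (k : ι) :
    (fun v : ι → ℝ => v ∘ σ) ⁻¹' strictMaxSet s k = strictMaxSet s (σ k) := by
  ext v
  simp only [strictMaxSet, Set.mem_preimage, Set.mem_ofPred_eq, Function.comp_apply]
  constructor
  · intro h m hm hmk
    simpa using h (σ.symm m) ((hσ _).1 (by simpa using hm)) (by rintro rfl; simp at hmk)
  · intro h m hm hmk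
    exact h (σ m) ((hσ m).2 hm) (σ.injective.ne hmk)

lemma disjoint_strictMaxSet {k k' : ι} (hk : k ∈ s) (hk' : k' ∈ s) (hne : k ≠ k') :
    Disjoint (strictMaxSet s k) (strictMaxSet s k') :=
  Set.disjoint_left.2 fun _ h h' => lt_asymm (h k' hk' hne.symm) (h' k hk hne)

lemma setOf_injOn_subset_biUnion_strictMaxSet (hs : s.Nonempty) :
    {v : ι → ℝ | Set.InjOn v s} ⊆ ⋃ k ∈ s, strictMaxSet s k := by
  intro v hv
  obtain ⟨k, hk, hmax⟩ := s.exists_max_image v hs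
  exact Set.mem_biUnion hk fun m hm hmk => (hmax m hm).lt_of_ne fun h => hmk (hv hm hk h)

lemma measure_compl_setOf_injOn_eq_zero (ν : Measure (ι → ℝ))
    (hties : ∀ a ∈ s, ∀ b ∈ s, a ≠ b → ν {v | v a = v b} = 0) :
    ν {v : ι → ℝ | Set.InjOn v s}ᶜ = 0 := by
  have hsub : {v : ι → ℝ | Set.InjOn v s}ᶜ ⊆
      ⋃ a ∈ s, ⋃ b ∈ s, ⋃ (_ : a ≠ b), {v | v a = v b} := by
    intro v hv
    simp only [Set.InjOn, Set.mem_compl_iff, Set.mem_ofPred_eq, not_forall] at hv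
    obtain ⟨a, ha, b, hb, hab, hne⟩ := hv
    simp only [Set.mem_iUnion]
    exact ⟨a, ha, b, hb, hne, hab⟩
  exact measure_mono_null hsub <| (measure_biUnion_null_iff s.countable_toSet).2 fun a ha =>
    (measure_biUnion_null_iff s.countable_toSet).2 fun b hb =>
      measure_iUnion_null fun hab => hties a ha b hb hab

-- The swaps of `s` permute the events `strictMaxSet s k ∩ E`, `k ∈ s`, so these are
-- equiprobable, and they partition `E` up to ties.
theorem card_mul_measure_strictMaxSet_inter [DecidableEq ι] (ν : Measure (ι → ℝ))
    (hswap : ∀ a ∈ s, ∀ b ∈ s, MeasurePreserving (fun v => v ∘ Equiv.swap a b) ν ν)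
    (hties : ∀ a ∈ s, ∀ b ∈ s, a ≠ b → ν {v | v a = v b} = 0)
    {E : Set (ι → ℝ)} (hE : MeasurableSet E)
    (hEswap : ∀ a ∈ s, ∀ b ∈ s, (fun v => v ∘ Equiv.swap a b) ⁻¹' E = E)
    {k : ι} (hk : k ∈ s) :
    s.card * ν (strictMaxSet s k ∩ E) = ν E := by
  have hequal : ∀ k' ∈ s, ν (strictMaxSet s k' ∩ E) = ν (strictMaxSet s k ∩ E) := by
    intro k' hk'
    rw [← (hswap k hk k' hk').measure_preimage
      ((measurableSet_strictMaxSet s k').inter hE).nullMeasurableSet, Set.preimage_inter,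
      preimage_comp_strictMaxSet _ (Equiv.swap_apply_mem_iff hk hk'),
      Equiv.swap_apply_right, hEswap k hk k' hk']
  calc (s.card : ℝ≥0∞) * ν (strictMaxSet s k ∩ E)
      = ∑ k' ∈ s, ν (strictMaxSet s k' ∩ E) := by
        rw [Finset.sum_congr rfl hequal, Finset.sum_const, nsmul_eq_mul]
    _ = ν (⋃ k' ∈ s, strictMaxSet s k' ∩ E) :=
        (measure_biUnion_finset (fun a ha b hb hab => (disjoint_strictMaxSet ha hb hab).mono
          Set.inter_subset_left Set.inter_subset_left)
          fun k' _ => (measurableSet_strictMaxSet s k').inter hE).symm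
    _ = ν E := by
        refine le_antisymm
          (measure_mono (Set.iUnion₂_subset fun _ _ => Set.inter_subset_right)) ?_
        rw [← measure_sdiff_null (s := E) (measure_compl_setOf_injOn_eq_zero ν hties)]
        refine measure_mono fun v hv => ?_
        obtain ⟨k', hk', hv'⟩ := Set.mem_iUnion₂.1
          (setOf_injOn_subset_biUnion_strictMaxSet ⟨k, hk⟩ (by simpa using hv.2))
        exact Set.mem_biUnion hk' ⟨hv', hv.1⟩

lemma strictMaxSet_Icc_one (k : ℕ) :
    strictMaxSet (Finset.Icc 1 k) k = {v | ∀ m, 1 ≤ m → m < k → v m < v k} := by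
  ext v
  simp only [strictMaxSet, Finset.mem_Icc, Set.mem_ofPred_eq]
  exact forall_congr' fun m => ⟨fun h h1 hk => h ⟨h1, hk.le⟩ hk.ne,
    fun h hm hmk => h hm.1 (lt_of_le_of_ne hm.2 hmk)⟩

end StrictMax

/-- For i.i.d. real random variables with continuous common distribution, the joint
probability of records at times `i < j` factorizes: `ℙ(ζ i = 1, ζ j = 1) = 1/(i*j)`. -/
theorem record_joint_prob {Ω : Type*} [MeasureSpace Ω]
    [IsProbabilityMeasure (ℙ : Measure Ω)]
    (X : ℕ → Ω → ℝ) (hmeas : ∀ i, Measurable (X i))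
    (hindep : iIndepFun X ℙ)
    (hid : ∀ i j, IdentDistrib (X i) (X j) ℙ ℙ)
    (hcont : ∀ c : ℝ, ℙ {ω | X 1 ω = c} = 0) :
    ∀ i j : ℕ, 1 ≤ i → i < j →
      ℙ {ω | (∀ m, 1 ≤ m → m < i → X m ω < X i ω) ∧
             (∀ m, 1 ≤ m → m < j → X m ω < X j ω)}
        = ((i : ℝ≥0∞) * j)⁻¹ := by
  intro i j hi hij
  set ν := (ℙ : Measure Ω).map fun ω n => X n ω
  have : IsProbabilityMeasure ν :=
    Measure.isProbabilityMeasure_map (measurable_pi_lambda _ hmeas).aemeasurable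
  have hatom (n : ℕ) : NullSingletonClass ((ℙ : Measure Ω).map (X n)) :=
    ⟨fun c => by
      rw [(hid n 1).map_eq, Measure.map_apply (hmeas 1) (measurableSet_singleton c)]
      exact hcont c⟩
  have hswap (s : Finset ℕ) : ∀ a ∈ s, ∀ b ∈ s,
      MeasurePreserving (fun v => v ∘ Equiv.swap a b) ν ν := fun _ _ _ _ =>
    hindep.measurePreserving_comp_perm hmeas hid _
  have hties (s : Finset ℕ) : ∀ a ∈ s, ∀ b ∈ s, a ≠ b → ν {v | v a = v b} = 0 :=
    fun _ _ _ _ hab => hindep.map_fun_setOf_apply_eq_eq_zero hmeas hatom hab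
  have hrecord_j : (j : ℝ≥0∞) * ν (strictMaxSet (Finset.Icc 1 j) j) = 1 := by
    simpa using card_mul_measure_strictMaxSet_inter (s := Finset.Icc 1 j) ν (hswap _) (hties _)
      MeasurableSet.univ (by simp) (k := j) (by simp; omega)
  have hsymm : ∀ a ∈ Finset.Icc 1 i, ∀ b ∈ Finset.Icc 1 i,
      (fun v => v ∘ Equiv.swap a b) ⁻¹' strictMaxSet (Finset.Icc 1 j) j =
        strictMaxSet (Finset.Icc 1 j) j := by
    intro a ha b hb
    simp only [Finset.mem_Icc] at ha hb
    rw [preimage_comp_strictMaxSet _ (Equiv.swap_apply_mem_iff (s := Finset.Icc 1 j)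
      (by simp; omega) (by simp; omega)), Equiv.swap_apply_of_ne_of_ne (by omega) (by omega)]
  have hrecord_ij : (i : ℝ≥0∞) * ν (strictMaxSet (Finset.Icc 1 i) i ∩
      strictMaxSet (Finset.Icc 1 j) j) = ν (strictMaxSet (Finset.Icc 1 j) j) := by
    simpa using card_mul_measure_strictMaxSet_inter (s := Finset.Icc 1 i) ν (hswap _) (hties _)
      (measurableSet_strictMaxSet _ _) hsymm (k := i) (by simp; omega)
  have hevent : {ω | (∀ m, 1 ≤ m → m < i → X m ω < X i ω) ∧
      (∀ m, 1 ≤ m → m < j → X m ω < X j ω)} = (fun ω n => X n ω) ⁻¹'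
        (strictMaxSet (Finset.Icc 1 i) i ∩ strictMaxSet (Finset.Icc 1 j) j) := by
    simp only [strictMaxSet_Icc_one]; rfl
  rw [hevent, ← Measure.map_apply (measurable_pi_lambda _ hmeas)
    ((measurableSet_strictMaxSet _ _).inter (measurableSet_strictMaxSet _ _))]
  refine ENNReal.eq_inv_of_mul_eq_one_left ?_
  rw [mul_comm, mul_comm (i : ℝ≥0∞), mul_assoc, hrecord_ij, hrecord_j]
end
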